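/- arXiv:2009.01286 — 2 statements merged into one kernel-verified Lean document; each statement's English description precedes it below -/
import Mathlib

section
/- If G is a nut graph and uv is an edge of G with kernel eigenvector values a at u and b at v, then the vector obtained by assigning values b, −a, −b, a to the four subdivision vertices w, x, y, z of the path u–w–x–y–z–v in S(G,uv), while keeping all other values from G, is a kernel vector of the adjacency matrix of S(G,uv) with no zero entries. -/
open Matrix

attribute [local instance] Classical.propDecidable

/-- A nut graph: a connected simple graph whose adjacency matrix has a
one-dimensional kernel spanned by a vector with all entries nonzero. -/
def IsNutGraph {V : Type*} [Fintype V] (G : SimpleGraph V) : Prop :=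
  G.Connected ∧ ∃ x : V → ℝ,
    G.adjMatrix ℝ *ᵥ x = 0 ∧ (∀ v, x v ≠ 0) ∧
    ∀ y : V → ℝ, G.adjMatrix ℝ *ᵥ y = 0 → ∃ c : ℝ, y = c • x

/-- The subdivision construction `S(G, uv)`: replace edge `uv` by a path
`u–w–x–y–z–v` through four new vertices `w = inr 0`, `x = inr 1`,
`y = inr 2`, `z = inr 3`. -/
def subdivExt {V : Type*} (G : SimpleGraph V) (u v : V) : SimpleGraph (V ⊕ Fin 4) where
  Adj a b := match a, b with
    | Sum.inl a, Sum.inl b => G.Adj a b ∧ ¬(a = u ∧ b = v) ∧ ¬(a = v ∧ b = u)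
    | Sum.inl a, Sum.inr i => (a = u ∧ i = 0) ∨ (a = v ∧ i = 3)
    | Sum.inr i, Sum.inl a => (a = u ∧ i = 0) ∨ (a = v ∧ i = 3)
    | Sum.inr i, Sum.inr j => i.val + 1 = j.val ∨ j.val + 1 = i.val
  symm := by
    constructor
    rintro (a | i) (b | j) h
    · exact ⟨h.1.symm, fun hc => h.2.2 ⟨hc.2, hc.1⟩, fun hc => h.2.1 ⟨hc.2, hc.1⟩⟩
    · exact h
    · exact h
    · exact h.symm
  loopless := by
    constructor
    rintro (a | i) h
    · exact G.loopless.irrefl a h.1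
    · omega

/-! Deleting `uv` removes `x v` from the kernel equation at `u` and `x u` from the one at `v`;
the new neighbours `w` and `z` carry exactly these values, and each inner vertex of the path
`u–w–x–y–z–v` sees two values `±a` or `±b` of opposite sign. -/

section

open SimpleGraph

variable {V : Type*} (G : SimpleGraph V) {u v : V}

theorem subdivExt_adjMatrix_inl_inl (huv : G.Adj u v) (a b : V) :
    (subdivExt G u v).adjMatrix ℝ (.inl a) (.inl b) =
      G.adjMatrix ℝ a b - (if a = u ∧ b = v then 1 else 0) - (if a = v ∧ b = u then 1 else 0) := by
  by_cases h1 : a = u ∧ b = v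
  · obtain ⟨rfl, rfl⟩ := h1
    simp [subdivExt, huv, huv.ne]
  by_cases h2 : a = v ∧ b = u
  · obtain ⟨rfl, rfl⟩ := h2
    simp [subdivExt, huv.symm, huv.ne]
  have hadj : (subdivExt G u v).Adj (.inl a) (.inl b) ↔ G.Adj a b := ⟨And.left, fun h => ⟨h, h1, h2⟩⟩
  simp [adjMatrix_apply, hadj, h1, h2]

variable [Fintype V]

theorem subdivExt_adjMatrix_mulVec_inl (huv : G.Adj u v) (y : V → ℝ) (t : Fin 4 → ℝ) (a : V) :
    ((subdivExt G u v).adjMatrix ℝ *ᵥ Sum.elim y t) (.inl a) =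
      (G.adjMatrix ℝ *ᵥ y) a + (if a = u then t 0 - y v else 0) +
        (if a = v then t 3 - y u else 0) := by
  have hold : ∑ b, (subdivExt G u v).adjMatrix ℝ (.inl a) (.inl b) * y b =
      (G.adjMatrix ℝ *ᵥ y) a - (if a = u then y v else 0) - (if a = v then y u else 0) := by
    simp_rw [subdivExt_adjMatrix_inl_inl G huv, sub_mul, Finset.sum_sub_distrib, ite_mul, ite_and,
      one_mul, zero_mul, Finset.sum_ite_irrel, Finset.sum_ite_eq', Finset.mem_univ, if_true,
      Finset.sum_const_zero, mulVec, dotProduct]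
  have hnew : ∑ i, (subdivExt G u v).adjMatrix ℝ (.inl a) (.inr i) * t i =
      (if a = u then t 0 else 0) + (if a = v then t 3 else 0) := by
    by_cases hau : a = u <;> by_cases hav : a = v <;>
      simp_all [adjMatrix_apply, subdivExt, Fin.sum_univ_four, huv.ne]
  rw [mulVec, dotProduct, Fintype.sum_sum_type]
  simp only [Sum.elim_inl, Sum.elim_inr, hold, hnew]
  split_ifs <;> ring

theorem subdivExt_adjMatrix_mulVec_inr (y : V → ℝ) (t : Fin 4 → ℝ) (i : Fin 4) :
    ((subdivExt G u v).adjMatrix ℝ *ᵥ Sum.elim y t) (.inr i) =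
      ![y u + t 1, t 0 + t 2, t 1 + t 3, t 2 + y v] i := by
  fin_cases i <;>
    simp [mulVec, dotProduct, Fintype.sum_sum_type, adjMatrix_apply, subdivExt, Fin.sum_univ_four,
      add_comm]

end

theorem subdivExt_kernel_vector_general {V : Type*} [Fintype V] (G : SimpleGraph V)
    (u v : V) (huv : G.Adj u v) (x : V → ℝ)
    (hker : G.adjMatrix ℝ *ᵥ x = 0) (hnz : ∀ w, x w ≠ 0) :
    ((subdivExt G u v).adjMatrix ℝ *ᵥ
        (Sum.elim x (![x v, -x u, -x v, x u]))) = 0 ∧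
      ∀ w : V ⊕ Fin 4, Sum.elim x (![x v, -x u, -x v, x u]) w ≠ 0 := by
  refine ⟨funext ?_, ?_⟩
  · rintro (a | i)
    · rw [subdivExt_adjMatrix_mulVec_inl G huv, hker]
      simp
    · rw [subdivExt_adjMatrix_mulVec_inr]
      fin_cases i <;> simp
  · rintro (a | i)
    · exact hnz a
    · fin_cases i <;> simp [hnz u, hnz v]

/-- If `G` is a nut graph with kernel eigenvector `x`, taking values `a` at `u`
and `b` at `v` on an edge `uv`, then assigning `b, −a, −b, a` to the four
subdivision vertices `w, x, y, z` of `S(G,uv)` and keeping all other values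
gives a kernel vector of the adjacency matrix of `S(G,uv)` with no zero
entries. -/
theorem subdivExt_kernel_vector {V : Type*} [Fintype V] (G : SimpleGraph V)
    (u v : V) (huv : G.Adj u v) (hG : IsNutGraph G) (x : V → ℝ)
    (hker : G.adjMatrix ℝ *ᵥ x = 0) (hnz : ∀ w, x w ≠ 0) :
    ((subdivExt G u v).adjMatrix ℝ *ᵥ
        (Sum.elim x (![x v, -x u, -x v, x u]))) = 0 ∧
      ∀ w : V ⊕ Fin 4, Sum.elim x (![x v, -x u, -x v, x u]) w ≠ 0 :=
  subdivExt_kernel_vector_general G u v huv x hker hnz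
end

section
/- Let G be a graph with a bridge uv, so that G − uv has two components G_1 ∋ u and G_2 ∋ v. If x is a kernel vector of the adjacency matrix of G, then the vector on B(G,uv) defined by negating x on G_1 (including u), keeping x on G_2 (including v), and assigning −x(v) to the new vertex adjacent to u and x(u) to the new vertex adjacent to v, is a kernel vector of the adjacency matrix of B(G,uv). -/
open Matrix

attribute [local instance] Classical.propDecidable

/-- The bridge construction `B(G, uv)`: insert two new vertices `x = inr 0` and
`y = inr 1` on the edge `uv`, replacing it by the path `u–x–y–v`. -/
def bridgeExt {V : Type*} (G : SimpleGraph V) (u v : V) : SimpleGraph (V ⊕ Fin 2) where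
  Adj a b := match a, b with
    | Sum.inl a, Sum.inl b => G.Adj a b ∧ ¬(a = u ∧ b = v) ∧ ¬(a = v ∧ b = u)
    | Sum.inl a, Sum.inr i => (a = u ∧ i = 0) ∨ (a = v ∧ i = 1)
    | Sum.inr i, Sum.inl a => (a = u ∧ i = 0) ∨ (a = v ∧ i = 1)
    | Sum.inr i, Sum.inr j => i ≠ j
  symm := by
    constructor
    rintro (a | i) (b | j) h
    · exact ⟨h.1.symm, fun hc => h.2.2 ⟨hc.2, hc.1⟩, fun hc => h.2.1 ⟨hc.2, hc.1⟩⟩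
    · exact h
    · exact h
    · exact h.symm
  loopless := by
    constructor
    rintro (a | i) h
    · exact G.ne_of_adj h.1 rfl
    · exact h rfl

/-!
Write `G' = G − uv` and let `s = -1` on the component of `u` in `G'` and `s = 1` elsewhere.
As `s` is constant along the edges of `G'`, multiplying by `s` commutes with the adjacency
operator of `G'`, and `A_G x = 0` says `A_{G'} x = -[· = u] x v - [· = v] x u`. Since `uv` is a
bridge, `s u = -1` and `s v = 1`, so these two boundary terms are cancelled exactly by the values
`-x v` and `x u` on the new neighbours of `u` and `v`; at the new vertices the equations read
`-x u + x u = 0` and `x v - x v = 0`.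
-/

namespace SimpleGraph

variable {V : Type*} [Fintype V] {R : Type*} [Ring R]

theorem adjMatrix_deleteEdges_mulVec_apply {G : SimpleGraph V} {u v : V}
    (huv : G.Adj u v) (x : V → R) (a : V) :
    ((G.deleteEdges {s(u, v)}).adjMatrix R *ᵥ x) a =
      (G.adjMatrix R *ᵥ x) a - (if a = u then x v else 0) - (if a = v then x u else 0) := by
  have hsplit : ∀ b, (if (G.deleteEdges {s(u, v)}).Adj a b then x b else 0) =
      (if G.Adj a b then x b else 0)
        - (if a = u ∧ b = v then x b else 0) - (if a = v ∧ b = u then x b else 0) := by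
    intro b
    simp only [deleteEdges_adj, Set.mem_singleton_iff, Sym2.eq_iff]
    split_ifs <;> grind [huv.ne, G.adj_symm huv]
  simp only [mulVec, dotProduct, adjMatrix_apply, ite_mul, one_mul, zero_mul]
  rw [Finset.sum_congr rfl fun b _ => hsplit b, Finset.sum_sub_distrib, Finset.sum_sub_distrib]
  simp [ite_and]

theorem adjMatrix_mulVec_ite_neg_apply (H : SimpleGraph V) [DecidableRel H.Adj]
    (P : V → Prop) [DecidablePred P]
    (hP : ∀ a b, H.Adj a b → (P a ↔ P b)) (x : V → R) (a : V) :
    (H.adjMatrix R *ᵥ fun b => if P b then -x b else x b) a =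
      if P a then -(H.adjMatrix R *ᵥ x) a else (H.adjMatrix R *ᵥ x) a := by
  have hnbr : ∀ b ∈ H.neighborFinset a, (if P b then -x b else x b) =
      if P a then -x b else x b := fun b hb => by
    simp only [hP a b ((H.mem_neighborFinset a b).mp hb)]
  simp only [adjMatrix_mulVec_apply, Finset.sum_congr rfl hnbr]
  split_ifs <;> simp [Finset.sum_neg_distrib]

end SimpleGraph

section bridgeExt

variable {V : Type*} {R : Type*} [Ring R] (G : SimpleGraph V) (u v : V)

theorem bridgeExt_adj_inl_inl {a b : V} :
    (bridgeExt G u v).Adj (.inl a) (.inl b) ↔ (G.deleteEdges {s(u, v)}).Adj a b := by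
  simp [bridgeExt, SimpleGraph.deleteEdges_adj]

variable [Fintype V]

theorem bridgeExt_adjMatrix_mulVec_inl (g : V → R) (t : Fin 2 → R) (a : V) :
    ((bridgeExt G u v).adjMatrix R *ᵥ Sum.elim g t) (.inl a) =
      ((G.deleteEdges {s(u, v)}).adjMatrix R *ᵥ g) a
        + (if a = u then t 0 else 0) + (if a = v then t 1 else 0) := by
  simp only [mulVec, dotProduct, Fintype.sum_sum_type, Fin.sum_univ_two,
    SimpleGraph.adjMatrix_apply, bridgeExt_adj_inl_inl, Sum.elim_inl, Sum.elim_inr]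
  simp [bridgeExt, add_assoc]

theorem bridgeExt_adjMatrix_mulVec_inr_zero (g : V → R) (t : Fin 2 → R) :
    ((bridgeExt G u v).adjMatrix R *ᵥ Sum.elim g t) (.inr 0) = g u + t 1 := by
  simp [mulVec, dotProduct, Fintype.sum_sum_type, Fin.sum_univ_two, bridgeExt]

theorem bridgeExt_adjMatrix_mulVec_inr_one (g : V → R) (t : Fin 2 → R) :
    ((bridgeExt G u v).adjMatrix R *ᵥ Sum.elim g t) (.inr 1) = g v + t 0 := by
  simp [mulVec, dotProduct, Fintype.sum_sum_type, Fin.sum_univ_two, bridgeExt]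

end bridgeExt

/-- If `uv` is a bridge of `G` and `x` is a kernel vector of the adjacency
matrix of `G`, then the vector on `B(G,uv)` obtained by negating `x` on the
component of `u` in `G − uv`, keeping `x` on the component of `v`, and
assigning `−x v` to the new vertex adjacent to `u` and `x u` to the new vertex
adjacent to `v`, is a kernel vector of the adjacency matrix of `B(G,uv)`. -/
theorem bridgeExt_kernel_vector {V : Type*} [Fintype V] (G : SimpleGraph V)
    (u v : V) (huv : G.Adj u v) (hbridge : G.IsBridge s(u, v))
    (x : V → ℝ) (hker : G.adjMatrix ℝ *ᵥ x = 0) :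
    (bridgeExt G u v).adjMatrix ℝ *ᵥ
      (Sum.elim
        (fun a => if (G.deleteEdges {s(u, v)}).Reachable u a then -x a else x a)
        (![-x v, x u])) = 0 := by
  have hv : ¬ (G.deleteEdges {s(u, v)}).Reachable u v := SimpleGraph.isBridge_iff.mp hbridge
  have hcomp : ∀ a b, (G.deleteEdges {s(u, v)}).Adj a b →
      ((G.deleteEdges {s(u, v)}).Reachable u a ↔ (G.deleteEdges {s(u, v)}).Reachable u b) :=
    fun _ _ hab => ⟨fun h => h.trans hab.reachable, fun h => h.trans hab.symm.reachable⟩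
  rw [funext_iff, Sum.forall, Fin.forall_fin_two]
  refine ⟨fun a => ?_, ?_, ?_⟩
  · rw [bridgeExt_adjMatrix_mulVec_inl, SimpleGraph.adjMatrix_mulVec_ite_neg_apply _ _ hcomp,
      SimpleGraph.adjMatrix_deleteEdges_mulVec_apply huv, hker]
    by_cases hau : a = u
    · subst hau
      simp [huv.ne]
    by_cases hav : a = v
    · subst hav
      simp [hv, hau]
    · simp [hau, hav]
  · rw [bridgeExt_adjMatrix_mulVec_inr_zero]
    simp
  · rw [bridgeExt_adjMatrix_mulVec_inr_one]
    simp [hv]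
end
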